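/- Let α = 2 and β > 0, let φ be an analytic self-map of the open unit disk D, and let g be analytic on D. Then the operator U_gC_φ, defined by (U_gC_φ f)(z) = ∫₀^z f(φ(ξ)) g'(ξ) dξ, is bounded from Z^2 to Z^β if and only if sup_{z∈D} (1−|z|²)^β |g'(z)φ'(z)| / (1−|φ(z)|²) < ∞ and sup_{z∈D} (1−|z|²)^β log(2/(1−|φ(z)|²)) |g''(z)| < ∞. -/

import Mathlib

noncomputable section

/-- The open unit disk in the complex plane. -/
def uD : Set ℂ := Metric.ball 0 1

/-- The Zygmund-type quantity `(1-|z|^2)^a * |f''(z)|`. -/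
def zygS (a : ℝ) (f : ℂ → ℂ) (z : ℂ) : ℝ := (1 - ‖z‖ ^ 2) ^ a * ‖deriv (deriv f) z‖

/-- Membership in the Zygmund-type space `Z^a`. -/
def memZ (a : ℝ) (f : ℂ → ℂ) : Prop :=
  AnalyticOn ℂ f uD ∧ ∃ M : ℝ, ∀ z ∈ uD, zygS a f z ≤ M

/-- The Zygmund-type norm `‖f‖_{Z^a} = |f 0| + |f' 0| + sup_{z ∈ D} (1-|z|^2)^a |f''(z)|`. -/
def zNorm (a : ℝ) (f : ℂ → ℂ) : ℝ := ‖f 0‖ + ‖deriv f 0‖ + sSup (zygS a f '' uD)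

/-- Membership in the weighted space `H^∞_{v_b}` (for `u` analytic on `uD`). -/
def memHv (b : ℝ) (u : ℂ → ℂ) : Prop :=
  ∃ M : ℝ, ∀ z ∈ uD, (1 - ‖z‖ ^ 2) ^ b * ‖u z‖ ≤ M

/-- `T` is a bounded operator from `Z^a` to `Z^b`. -/
def boundedOp (a b : ℝ) (T : (ℂ → ℂ) → ℂ → ℂ) : Prop :=
  (∀ f, memZ a f → memZ b (T f)) ∧
    ∃ C > 0, ∀ f, memZ a f → zNorm b (T f) ≤ C * zNorm a f

/-- `(U_g C_φ f)(z) = ∫₀^z f(φ(ξ)) g'(ξ) dξ`, parametrized along the segment from `0` to `z`. -/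
def UgCphi (g φ : ℂ → ℂ) (f : ℂ → ℂ) : ℂ → ℂ :=
  fun z => ∫ t in (0:ℝ)..1, z * (f (φ ((t : ℂ) * z)) * deriv g ((t : ℂ) * z))


/-!
Since `(U_g C_φ f)'' = f'(φ) φ' g' + f(φ) g''`, sufficiency reduces to the growth estimates
`|f'(z)| ≲ ‖f‖ / (1 - |z|²)` and `|f(z)| ≲ ‖f‖ log (2 / (1 - |z|²))` on `Z²`, obtained by
integrating the bound on `f''` twice along the radius `[0, z]`. For necessity, `U_g C_φ` is tested
at `a = φ(z)` against `z`, `ℓ_a(z) = log (2 / (1 - ā z))` and `ℓ_a² / ℓ_a(a)`, whose `Z²`-norms are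
bounded independently of `a`.
-/

open Set Filter Topology ComplexConjugate

lemma mem_uD {z : ℂ} : z ∈ uD ↔ ‖z‖ < 1 := mem_ball_zero_iff

lemma isOpen_uD : IsOpen uD := Metric.isOpen_ball

lemma zero_mem_uD : (0 : ℂ) ∈ uD := mem_uD.2 (by simp)

lemma norm_ofReal_mul {t : ℝ} (ht : 0 ≤ t) (z : ℂ) : ‖(t : ℂ) * z‖ = t * ‖z‖ := by
  rw [norm_mul, Complex.norm_of_nonneg ht]

lemma ofReal_mul_mem_uD {z : ℂ} (hz : z ∈ uD) {t : ℝ} (ht : t ∈ Icc (0 : ℝ) 1) :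
    (t : ℂ) * z ∈ uD := by
  rw [mem_uD, norm_ofReal_mul ht.1]
  nlinarith [mem_uD.1 hz, norm_nonneg z, ht.2]

lemma one_sub_norm_sq_pos {z : ℂ} (hz : z ∈ uD) : 0 < 1 - ‖z‖ ^ 2 := by
  nlinarith [mem_uD.1 hz, norm_nonneg z]

lemma one_sub_norm_sq_le_two_mul {z : ℂ} (hz : z ∈ uD) : 1 - ‖z‖ ^ 2 ≤ 2 * (1 - ‖z‖) := by
  nlinarith [mem_uD.1 hz, norm_nonneg z]

lemma one_sub_mul_norm_pos {z : ℂ} (hz : z ∈ uD) {t : ℝ} (ht : t ∈ Icc (0 : ℝ) 1) :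
    0 < 1 - t * ‖z‖ := by
  nlinarith [mem_uD.1 hz, norm_nonneg z, ht.2]

lemma hasDerivAt_one_sub_mul (r t : ℝ) : HasDerivAt (fun s : ℝ => 1 - s * r) (-r) t := by
  simpa using ((hasDerivAt_id t).mul_const r).const_sub 1

lemma zygS_nonneg {a : ℝ} {f : ℂ → ℂ} {z : ℂ} (hz : z ∈ uD) : 0 ≤ zygS a f z :=
  mul_nonneg (Real.rpow_nonneg (one_sub_norm_sq_pos hz).le a) (norm_nonneg _)

theorem norm_le_of_radial_deriv_le {u : ℂ → ℂ} {w : ℂ} {B B' : ℝ → ℝ}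
    (hu : ∀ t ∈ Icc (0 : ℝ) 1, DifferentiableAt ℂ u (t * w))
    (hB : ∀ t ∈ Icc (0 : ℝ) 1, HasDerivAt B (B' t) t) (h0 : ‖u 0‖ ≤ B 0)
    (hbound : ∀ t ∈ Icc (0 : ℝ) 1, ‖w‖ * ‖deriv u (t * w)‖ ≤ B' t) : ‖u w‖ ≤ B 1 := by
  have hderiv : ∀ t ∈ Icc (0 : ℝ) 1,
      HasDerivAt (fun s : ℝ => u (s * w)) (deriv u (t * w) * w) t := fun t ht =>
    ((hu t ht).hasDerivAt.comp (t : ℂ) (hasDerivAt_mul_const w)).comp_ofReal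
  have := image_norm_le_of_norm_deriv_right_le_deriv_boundary' (f := fun s : ℝ => u (s * w))
    (fun t ht => (hderiv t ht).continuousAt.continuousWithinAt)
    (fun t ht => (hderiv t (Ico_subset_Icc_self ht)).hasDerivWithinAt)
    (by simpa using h0)
    (fun t ht => (hB t ht).continuousAt.continuousWithinAt)
    (fun t ht => (hB t (Ico_subset_Icc_self ht)).hasDerivWithinAt)
    (fun t ht => by rw [norm_mul, mul_comm]; exact hbound t (Ico_subset_Icc_self ht))
    (right_mem_Icc.2 zero_le_one)
  simpa using this

section Growth

variable {f : ℂ → ℂ} {M : ℝ}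

lemma norm_deriv_deriv_mul_le (hM : ∀ z ∈ uD, zygS 2 f z ≤ M) {z : ℂ} (hz : z ∈ uD) :
    ‖deriv (deriv f) z‖ * (1 - ‖z‖) ^ 2 ≤ M := by
  have h := hM z hz
  rw [zygS, Real.rpow_two] at h
  have h1 : 0 ≤ 1 - ‖z‖ := by linarith [mem_uD.1 hz]
  have h2 : (1 - ‖z‖) ^ 2 ≤ (1 - ‖z‖ ^ 2) ^ 2 := by
    gcongr; nlinarith [norm_nonneg z, mem_uD.1 hz]
  nlinarith [norm_nonneg (deriv (deriv f) z)]

theorem norm_deriv_mul_one_sub_le (hf : AnalyticOnNhd ℂ f uD)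
    (hM : ∀ z ∈ uD, zygS 2 f z ≤ M) {z : ℂ} (hz : z ∈ uD) :
    ‖deriv f z‖ * (1 - ‖z‖) ≤ ‖deriv f 0‖ + M := by
  have hM0 : 0 ≤ M := (zygS_nonneg zero_mem_uD).trans (hM 0 zero_mem_uD)
  have key := norm_le_of_radial_deriv_le (u := deriv f) (w := z)
    (B := fun t => ‖deriv f 0‖ + M / (1 - t * ‖z‖) - M)
    (B' := fun t => M * ‖z‖ / (1 - t * ‖z‖) ^ 2)
    (fun t ht => (hf.deriv _ (ofReal_mul_mem_uD hz ht)).differentiableAt)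
    (fun t ht => ((((hasDerivAt_const t M).div (hasDerivAt_one_sub_mul ‖z‖ t)
      (one_sub_mul_norm_pos hz ht).ne').const_add _).sub_const M).congr_deriv (by ring))
    (by simp)
    (fun t ht => by
      have h := norm_deriv_deriv_mul_le hM (ofReal_mul_mem_uD hz ht)
      rw [norm_ofReal_mul ht.1] at h
      rw [mul_comm M, mul_div_assoc]
      gcongr
      rwa [le_div_iff₀ (pow_pos (one_sub_mul_norm_pos hz ht) 2)])
  have h1 : 0 < 1 - ‖z‖ := by linarith [mem_uD.1 hz]
  have : M / (1 - ‖z‖) * (1 - ‖z‖) = M := div_mul_cancel₀ M h1.ne'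
  simp only [one_mul] at key
  nlinarith [norm_nonneg (deriv f 0), norm_nonneg z]

theorem norm_le_add_mul_log (hf : AnalyticOnNhd ℂ f uD)
    (hM : ∀ z ∈ uD, zygS 2 f z ≤ M) {z : ℂ} (hz : z ∈ uD) :
    ‖f z‖ ≤ ‖f 0‖ + (‖deriv f 0‖ + M) * Real.log (1 - ‖z‖)⁻¹ := by
  have key := norm_le_of_radial_deriv_le (u := f) (w := z)
    (B := fun t => ‖f 0‖ - (‖deriv f 0‖ + M) * Real.log (1 - t * ‖z‖))
    (B' := fun t => (‖deriv f 0‖ + M) * ‖z‖ / (1 - t * ‖z‖))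
    (fun t ht => (hf _ (ofReal_mul_mem_uD hz ht)).differentiableAt)
    (fun t ht => ((((hasDerivAt_one_sub_mul ‖z‖ t).log (one_sub_mul_norm_pos hz ht).ne'
      ).const_mul _).const_sub _).congr_deriv (by ring))
    (by simp)
    (fun t ht => by
      have h := norm_deriv_mul_one_sub_le hf hM (ofReal_mul_mem_uD hz ht)
      rw [norm_ofReal_mul ht.1] at h
      rw [mul_comm _ ‖z‖, mul_div_assoc]
      gcongr
      rwa [le_div_iff₀ (one_sub_mul_norm_pos hz ht)])
  simpa [Real.log_inv, sub_eq_add_neg] using key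

end Growth

def logWeight (z : ℂ) : ℝ := Real.log (2 / (1 - ‖z‖ ^ 2))

section LogWeight

variable {z : ℂ} (hz : z ∈ uD)
include hz

lemma log_two_le_logWeight : Real.log 2 ≤ logWeight z := by
  have := one_sub_norm_sq_pos hz
  apply Real.log_le_log two_pos
  rw [le_div_iff₀ this]
  nlinarith [norm_nonneg z]

lemma two_thirds_le_logWeight : 2 / 3 ≤ logWeight z :=
  le_trans (by linarith [Real.log_two_gt_d9]) (log_two_le_logWeight hz)

lemma logWeight_pos : 0 < logWeight z := by linarith [two_thirds_le_logWeight hz]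

lemma log_inv_one_sub_norm_le_logWeight : Real.log (1 - ‖z‖)⁻¹ ≤ logWeight z := by
  have h := mem_uD.1 hz
  apply Real.log_le_log (inv_pos.2 (by linarith))
  rw [inv_eq_one_div, div_le_div_iff₀ (by linarith) (one_sub_norm_sq_pos hz)]
  nlinarith [norm_nonneg z]

end LogWeight

lemma memZ.analyticOnNhd {a : ℝ} {f : ℂ → ℂ} (hf : memZ a f) : AnalyticOnNhd ℂ f uD :=
  isOpen_uD.analyticOn_iff_analyticOnNhd.1 hf.1

lemma zygS_le_sSup {a : ℝ} {f : ℂ → ℂ} (hf : memZ a f) {z : ℂ} (hz : z ∈ uD) :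
    zygS a f z ≤ sSup (zygS a f '' uD) := by
  obtain ⟨M, hM⟩ := hf.2
  exact le_csSup ⟨M, by rintro _ ⟨w, hw, rfl⟩; exact hM w hw⟩ ⟨z, hz, rfl⟩

lemma sSup_zygS_nonneg (a : ℝ) (f : ℂ → ℂ) : 0 ≤ sSup (zygS a f '' uD) :=
  Real.sSup_nonneg (by rintro _ ⟨z, hz, rfl⟩; exact zygS_nonneg hz)

lemma zNorm_nonneg (a : ℝ) (f : ℂ → ℂ) : 0 ≤ zNorm a f := by
  unfold zNorm; linarith [sSup_zygS_nonneg a f, norm_nonneg (f 0), norm_nonneg (deriv f 0)]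

lemma sSup_zygS_le_zNorm (a : ℝ) (f : ℂ → ℂ) : sSup (zygS a f '' uD) ≤ zNorm a f := by
  unfold zNorm; linarith [norm_nonneg (f 0), norm_nonneg (deriv f 0)]

lemma zNorm_le {a M : ℝ} {f : ℂ → ℂ} (hM0 : 0 ≤ M) (hM : ∀ z ∈ uD, zygS a f z ≤ M) :
    zNorm a f ≤ ‖f 0‖ + ‖deriv f 0‖ + M := by
  have : sSup (zygS a f '' uD) ≤ M := Real.sSup_le (by rintro _ ⟨z, hz, rfl⟩; exact hM z hz) hM0
  unfold zNorm; linarith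

section ZygmundGrowth

variable {f : ℂ → ℂ} (hf : memZ 2 f) {z : ℂ} (hz : z ∈ uD)
include hf hz

theorem norm_deriv_mul_le_zNorm : ‖deriv f z‖ * (1 - ‖z‖ ^ 2) ≤ 2 * zNorm 2 f := by
  have h := norm_deriv_mul_one_sub_le hf.analyticOnNhd (fun w hw => zygS_le_sSup hf hw) hz
  have := sSup_zygS_nonneg 2 f
  calc ‖deriv f z‖ * (1 - ‖z‖ ^ 2) ≤ ‖deriv f z‖ * (2 * (1 - ‖z‖)) := by
        gcongr; exact one_sub_norm_sq_le_two_mul hz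
    _ ≤ 2 * zNorm 2 f := by unfold zNorm; nlinarith [norm_nonneg (f 0)]

theorem norm_le_zNorm_mul_logWeight : ‖f z‖ ≤ 3 * zNorm 2 f * logWeight z := by
  have h := norm_le_add_mul_log hf.analyticOnNhd (fun w hw => zygS_le_sSup hf hw) hz
  have hS := sSup_zygS_nonneg 2 f
  have hL := two_thirds_le_logWeight hz
  have hlog := log_inv_one_sub_norm_le_logWeight hz
  have hlog0 : 0 ≤ Real.log (1 - ‖z‖)⁻¹ :=
    Real.log_nonneg (one_le_inv₀ (by linarith [mem_uD.1 hz]) |>.2 (by linarith [norm_nonneg z]))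
  unfold zNorm at *
  nlinarith [norm_nonneg (f 0), norm_nonneg (deriv f 0)]

end ZygmundGrowth

lemma integral_mul_comp_ofReal_mul_eq_sub {F h : ℂ → ℂ} {z : ℂ}
    (hF : ∀ t ∈ Icc (0 : ℝ) 1, HasDerivAt F (h (t * z)) (t * z))
    (hh : ContinuousOn (fun t : ℝ => h (t * z)) (Icc 0 1)) :
    ∫ t in (0 : ℝ)..1, z * h (t * z) = F z - F 0 := by
  have hderiv : ∀ t ∈ uIcc (0 : ℝ) 1, HasDerivAt (fun s : ℝ => F (s * z)) (z * h (t * z)) t := by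
    intro t ht
    rw [uIcc_of_le zero_le_one] at ht
    exact (((hF t ht).comp (t : ℂ) (hasDerivAt_mul_const z)).comp_ofReal).congr_deriv (mul_comm _ _)
  have hint : IntervalIntegrable (fun t : ℝ => z * h (t * z)) MeasureTheory.volume 0 1 :=
    (continuousOn_const.mul hh).intervalIntegrable_of_Icc zero_le_one
  simpa using intervalIntegral.integral_eq_sub_of_hasDerivAt hderiv hint

section Operator

variable {φ g f : ℂ → ℂ} (hφ : AnalyticOnNhd ℂ φ uD) (hφm : MapsTo φ uD uD)
  (hg : AnalyticOnNhd ℂ g uD) (hf : AnalyticOnNhd ℂ f uD)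
include hφ hφm hg hf

theorem hasDerivAt_UgCphi {z : ℂ} (hz : z ∈ uD) :
    HasDerivAt (UgCphi g φ f) (f (φ z) * deriv g z) z := by
  have hh : AnalyticOnNhd ℂ (fun w => f (φ w) * deriv g w) uD := (hf.comp hφ hφm).mul hg.deriv
  obtain ⟨F, hF⟩ := hh.differentiableOn.isExactOn_ball
  have hT : UgCphi g φ f =ᶠ[𝓝 z] fun w => F w - F 0 := by
    filter_upwards [isOpen_uD.mem_nhds hz] with w hw
    exact integral_mul_comp_ofReal_mul_eq_sub (h := fun w => f (φ w) * deriv g w)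
      (fun t ht => hF _ (ofReal_mul_mem_uD hw ht))
      (hh.continuousOn.comp (by fun_prop) fun t ht => ofReal_mul_mem_uD hw ht)
  exact ((hF z hz).sub_const (F 0)).congr_of_eventuallyEq hT

theorem deriv_deriv_UgCphi {z : ℂ} (hz : z ∈ uD) :
    deriv (deriv (UgCphi g φ f)) z
      = deriv f (φ z) * (deriv g z * deriv φ z) + f (φ z) * deriv (deriv g) z := by
  have hT : deriv (UgCphi g φ f) =ᶠ[𝓝 z] fun w => f (φ w) * deriv g w := by
    filter_upwards [isOpen_uD.mem_nhds hz] with w hw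
    exact (hasDerivAt_UgCphi hφ hφm hg hf hw).deriv
  rw [hT.deriv_eq]
  have hfφ := (hf _ (hφm hz)).differentiableAt.hasDerivAt.comp z
    (hφ z hz).differentiableAt.hasDerivAt
  exact (hfφ.mul (hg.deriv z hz).differentiableAt.hasDerivAt).deriv.trans
    (by rw [Function.comp_apply]; ring)

end Operator

lemma UgCphi_zero (g φ f : ℂ → ℂ) : UgCphi g φ f 0 = 0 := by simp [UgCphi]

section Sufficiency

variable {β M₁ M₂ : ℝ} {φ g : ℂ → ℂ} (hφ : AnalyticOnNhd ℂ φ uD) (hφm : MapsTo φ uD uD)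
  (hg : AnalyticOnNhd ℂ g uD)
  (h₁ : ∀ z ∈ uD, (1 - ‖z‖ ^ 2) ^ β * ‖deriv g z * deriv φ z‖ / (1 - ‖φ z‖ ^ 2) ≤ M₁)
  (h₂ : ∀ z ∈ uD, (1 - ‖z‖ ^ 2) ^ β * logWeight (φ z) * ‖deriv (deriv g) z‖ ≤ M₂)
include hφ hφm hg h₁ h₂

theorem zygS_UgCphi_le {f : ℂ → ℂ} (hf : memZ 2 f) {z : ℂ} (hz : z ∈ uD) :
    zygS β (UgCphi g φ f) z ≤ (2 * M₁ + 3 * M₂) * zNorm 2 f := by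
  rw [zygS, deriv_deriv_UgCphi hφ hφm hg hf.analyticOnNhd hz]
  have hP : 0 ≤ (1 - ‖z‖ ^ 2) ^ β := Real.rpow_nonneg (one_sub_norm_sq_pos hz).le β
  have ha := one_sub_norm_sq_pos (hφm hz)
  have hN := zNorm_nonneg 2 f
  have hd := norm_deriv_mul_le_zNorm hf (hφm hz)
  have hv := norm_le_zNorm_mul_logWeight hf (hφm hz)
  have e₁ := h₁ z hz
  have e₂ := h₂ z hz
  set P := (1 - ‖z‖ ^ 2) ^ β
  set a := φ z
  have first : P * ‖deriv f a * (deriv g z * deriv φ z)‖ ≤ 2 * zNorm 2 f * M₁ := by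
    calc P * ‖deriv f a * (deriv g z * deriv φ z)‖
        = ‖deriv f a‖ * (1 - ‖a‖ ^ 2) * (P * ‖deriv g z * deriv φ z‖ / (1 - ‖a‖ ^ 2)) := by
          rw [norm_mul]; field_simp
      _ ≤ 2 * zNorm 2 f * M₁ := mul_le_mul hd e₁ (by positivity) (by positivity)
  have second : P * ‖f a * deriv (deriv g) z‖ ≤ 3 * zNorm 2 f * M₂ := by
    calc P * ‖f a * deriv (deriv g) z‖ = ‖f a‖ * (P * ‖deriv (deriv g) z‖) := by
          rw [norm_mul]; ring
      _ ≤ 3 * zNorm 2 f * logWeight a * (P * ‖deriv (deriv g) z‖) := by gcongr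
      _ = 3 * zNorm 2 f * (P * logWeight a * ‖deriv (deriv g) z‖) := by ring
      _ ≤ 3 * zNorm 2 f * M₂ := by gcongr
  calc P * ‖deriv f a * (deriv g z * deriv φ z) + f a * deriv (deriv g) z‖
      ≤ P * ‖deriv f a * (deriv g z * deriv φ z)‖ + P * ‖f a * deriv (deriv g) z‖ := by
        rw [← mul_add]; exact mul_le_mul_of_nonneg_left (norm_add_le _ _) hP
    _ ≤ (2 * M₁ + 3 * M₂) * zNorm 2 f := by linarith

theorem boundedOp_UgCphi_of_bounds : boundedOp 2 β (UgCphi g φ) := by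
  have h₁' z hz := (h₁ z hz).trans (le_abs_self M₁)
  have h₂' z hz := (h₂ z hz).trans (le_abs_self M₂)
  refine ⟨fun f hf => ⟨?_, _, fun z hz => zygS_UgCphi_le hφ hφm hg h₁ h₂ hf hz⟩,
    3 * logWeight (φ 0) * ‖deriv g 0‖ + (2 * |M₁| + 3 * |M₂|) + 1,
    by have := logWeight_pos (hφm zero_mem_uD); positivity, fun f hf => ?_⟩
  · exact (DifferentiableOn.analyticOnNhd (fun z hz =>
      (hasDerivAt_UgCphi hφ hφm hg hf.analyticOnNhd hz).differentiableAt.differentiableWithinAt)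
      isOpen_uD).analyticOn
  have hN := zNorm_nonneg 2 f
  have hderiv : ‖deriv (UgCphi g φ f) 0‖ ≤ 3 * zNorm 2 f * logWeight (φ 0) * ‖deriv g 0‖ := by
    rw [(hasDerivAt_UgCphi hφ hφm hg hf.analyticOnNhd zero_mem_uD).deriv, norm_mul]
    gcongr
    exact norm_le_zNorm_mul_logWeight hf (hφm zero_mem_uD)
  have hZ := zNorm_le (by positivity) fun z hz => zygS_UgCphi_le hφ hφm hg h₁' h₂' hf hz
  rw [UgCphi_zero, norm_zero] at hZ
  nlinarith

end Sufficiency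

/-- `logTest a z = log (2 / (1 - conj a * z))`; as `1 - conj a * z` lies in the right half-plane,
the principal logarithm splits into the difference used here. -/
def logTest (a z : ℂ) : ℂ := Complex.log 2 - Complex.log (1 - conj a * z)

lemma complex_log_two : Complex.log 2 = Real.log 2 := Complex.ofNat_log.symm

lemma logTest_zero (a : ℂ) : logTest a 0 = Real.log 2 := by
  rw [logTest, mul_zero, sub_zero, Complex.log_one, sub_zero, complex_log_two]

lemma one_sub_norm_mul_norm_le (a z : ℂ) : 1 - ‖a‖ * ‖z‖ ≤ ‖1 - conj a * z‖ := by
  simpa using norm_sub_norm_le 1 (conj a * z)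

lemma one_sub_conj_mul_self (a : ℂ) : 1 - conj a * a = ((1 - ‖a‖ ^ 2 : ℝ) : ℂ) := by
  rw [Complex.conj_mul']; push_cast; ring

lemma hasDerivAt_one_sub_conj_mul (a z : ℂ) :
    HasDerivAt (fun w => 1 - conj a * w) (-conj a) z := by
  simpa using ((hasDerivAt_id z).const_mul (conj a)).const_sub 1

section LogTest

variable {a z : ℂ} (ha : a ∈ uD)
include ha

lemma one_sub_conj_mul_mem_slitPlane (hz : z ∈ uD) : 1 - conj a * z ∈ Complex.slitPlane := by
  refine Complex.mem_slitPlane_iff.2 (Or.inl ?_)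
  have h := Complex.re_le_norm (conj a * z)
  rw [norm_mul, Complex.norm_conj] at h
  simp only [Complex.sub_re, Complex.one_re]
  nlinarith [mem_uD.1 ha, mem_uD.1 hz, norm_nonneg a, norm_nonneg z]

lemma hasDerivAt_logTest (hz : z ∈ uD) :
    HasDerivAt (logTest a) (conj a / (1 - conj a * z)) z :=
  (((hasDerivAt_one_sub_conj_mul a z).clog (one_sub_conj_mul_mem_slitPlane ha hz)).const_sub _
    ).congr_deriv (by rw [neg_div, neg_neg])

lemma analyticOnNhd_logTest : AnalyticOnNhd ℂ (logTest a) uD :=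
  DifferentiableOn.analyticOnNhd (fun _ hz => (hasDerivAt_logTest ha hz).differentiableAt
    |>.differentiableWithinAt) isOpen_uD

lemma deriv_deriv_logTest (hz : z ∈ uD) :
    deriv (deriv (logTest a)) z = deriv (logTest a) z ^ 2 := by
  have hT : deriv (logTest a) =ᶠ[𝓝 z] fun w => conj a / (1 - conj a * w) := by
    filter_upwards [isOpen_uD.mem_nhds hz] with w hw
    exact (hasDerivAt_logTest ha hw).deriv
  have hne := Complex.slitPlane_ne_zero (one_sub_conj_mul_mem_slitPlane ha hz)
  rw [hT.deriv_eq]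
  refine ((hasDerivAt_const z (conj a)).div (hasDerivAt_one_sub_conj_mul a z) hne).deriv.trans ?_
  rw [(hasDerivAt_logTest ha hz).deriv]
  field_simp
  ring

lemma one_sub_norm_sq_mul_norm_deriv_logTest_le (hz : z ∈ uD) :
    (1 - ‖z‖ ^ 2) * ‖deriv (logTest a) z‖ ≤ 2 := by
  have hu := one_sub_norm_mul_norm_le a z
  have hpos : 0 < 1 - ‖a‖ * ‖z‖ := by
    nlinarith [mem_uD.1 ha, mem_uD.1 hz, norm_nonneg a, norm_nonneg z]
  rw [(hasDerivAt_logTest ha hz).deriv, norm_div, Complex.norm_conj, mul_div_assoc',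
    div_le_iff₀ (hpos.trans_le hu)]
  nlinarith [mem_uD.1 ha, mem_uD.1 hz, norm_nonneg a, norm_nonneg z,
    one_sub_norm_sq_le_two_mul hz, one_sub_norm_sq_pos hz]

lemma norm_logTest_le (hz : z ∈ uD) : ‖logTest a z‖ ≤ 7 * logWeight a := by
  set u := 1 - conj a * z
  have hL := two_thirds_le_logWeight ha
  have hu0 : 0 < ‖u‖ := norm_pos_iff.2 (Complex.slitPlane_ne_zero
    (one_sub_conj_mul_mem_slitPlane ha hz))
  have hupper : Real.log ‖u‖ ≤ logWeight a := by
    refine (Real.log_le_log hu0 ?_).trans (log_two_le_logWeight ha)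
    calc ‖u‖ ≤ ‖(1 : ℂ)‖ + ‖conj a * z‖ := norm_sub_le _ _
      _ ≤ 2 := by
        rw [norm_one, norm_mul, Complex.norm_conj]
        nlinarith [mem_uD.1 ha, mem_uD.1 hz, norm_nonneg a, norm_nonneg z]
  have hlower : -logWeight a ≤ Real.log ‖u‖ := by
    have hpos := one_sub_norm_sq_pos ha
    rw [logWeight, ← Real.log_inv, inv_div]
    refine Real.log_le_log (by positivity) ((one_sub_norm_mul_norm_le a z).trans' ?_)
    nlinarith [mem_uD.1 ha, mem_uD.1 hz, norm_nonneg a, norm_nonneg z]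
  have hlog : ‖Complex.log u‖ ≤ logWeight a + Real.pi := by
    refine (Complex.norm_le_abs_re_add_abs_im _).trans (add_le_add ?_ ?_)
    · rw [Complex.log_re]; exact abs_le.2 ⟨hlower, hupper⟩
    · rw [Complex.log_im]; exact Complex.abs_arg_le_pi u
  have hlog2 : ‖Complex.log 2‖ ≤ logWeight a := by
    rw [complex_log_two, Complex.norm_real, Real.norm_of_nonneg (Real.log_nonneg one_le_two)]
    exact log_two_le_logWeight ha
  calc ‖logTest a z‖ ≤ ‖Complex.log 2‖ + ‖Complex.log u‖ := norm_sub_le _ _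
    _ ≤ 7 * logWeight a := by linarith [Real.pi_lt_d2]

lemma logTest_self : logTest a a = logWeight a := by
  have hpos := one_sub_norm_sq_pos ha
  rw [logTest, one_sub_conj_mul_self, complex_log_two, ← Complex.ofReal_log hpos.le, logWeight,
    Real.log_div two_ne_zero hpos.ne', Complex.ofReal_sub]

lemma norm_deriv_logTest_self : ‖deriv (logTest a) a‖ = ‖a‖ / (1 - ‖a‖ ^ 2) := by
  rw [(hasDerivAt_logTest ha ha).deriv, norm_div, Complex.norm_conj, one_sub_conj_mul_self,
    Complex.norm_real, Real.norm_of_nonneg (one_sub_norm_sq_pos ha).le]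

lemma deriv_logTest_zero : deriv (logTest a) 0 = conj a := by
  simp [(hasDerivAt_logTest ha zero_mem_uD).deriv]

lemma zygS_logTest_le (hz : z ∈ uD) : zygS 2 (logTest a) z ≤ 4 := by
  have h := one_sub_norm_sq_mul_norm_deriv_logTest_le ha hz
  have h0 : 0 ≤ (1 - ‖z‖ ^ 2) * ‖deriv (logTest a) z‖ :=
    mul_nonneg (one_sub_norm_sq_pos hz).le (norm_nonneg _)
  rw [zygS, Real.rpow_two, deriv_deriv_logTest ha hz, norm_pow]
  nlinarith [mul_self_le_mul_self h0 h]

lemma memZ_logTest : memZ 2 (logTest a) :=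
  ⟨(analyticOnNhd_logTest ha).analyticOn, 4, fun _ hz => zygS_logTest_le ha hz⟩

lemma zNorm_logTest_le : zNorm 2 (logTest a) ≤ 6 := by
  refine (zNorm_le (by norm_num) fun _ hz => zygS_logTest_le ha hz).trans ?_
  rw [deriv_logTest_zero ha, Complex.norm_conj, logTest_zero, Complex.norm_real,
    Real.norm_of_nonneg (Real.log_nonneg one_le_two)]
  linarith [Real.log_two_lt_d9, mem_uD.1 ha]

end LogTest

lemma hasDerivAt_sq_div {f : ℂ → ℂ} {z : ℂ} (hf : DifferentiableAt ℂ f z) (c : ℂ) :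
    HasDerivAt (fun w => f w ^ 2 / c) (2 * f z * deriv f z / c) z :=
  ((hf.hasDerivAt.pow 2).div_const c).congr_deriv (by simp)

lemma deriv_deriv_sq_div {f : ℂ → ℂ} {U : Set ℂ} (hU : IsOpen U) (hf : AnalyticOnNhd ℂ f U)
    (c : ℂ) {z : ℂ} (hz : z ∈ U) :
    deriv (deriv fun w => f w ^ 2 / c) z = 2 * (deriv f z ^ 2 + f z * deriv (deriv f) z) / c := by
  have hT : deriv (fun w => f w ^ 2 / c) =ᶠ[𝓝 z] fun w => 2 * f w * deriv f w / c := by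
    filter_upwards [hU.mem_nhds hz] with w hw
    exact (hasDerivAt_sq_div (hf w hw).differentiableAt c).deriv
  rw [hT.deriv_eq]
  exact ((((hf z hz).differentiableAt.hasDerivAt.const_mul 2).mul
    (hf.deriv z hz).differentiableAt.hasDerivAt).div_const c).deriv.trans (by ring)

def sqLogTest (a z : ℂ) : ℂ := logTest a z ^ 2 / logWeight a

section SqLogTest

variable {a : ℂ} (ha : a ∈ uD)
include ha

lemma logWeight_ne_zero : (logWeight a : ℂ) ≠ 0 :=
  Complex.ofReal_ne_zero.2 (logWeight_pos ha).ne'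

lemma sqLogTest_self : sqLogTest a a = logWeight a := by
  rw [sqLogTest, logTest_self ha]
  field_simp [logWeight_ne_zero ha]

lemma deriv_sqLogTest (z : ℂ) (hz : z ∈ uD) :
    deriv (sqLogTest a) z = 2 * logTest a z * deriv (logTest a) z / logWeight a :=
  (hasDerivAt_sq_div ((hasDerivAt_logTest ha hz).differentiableAt) _).deriv

lemma deriv_sqLogTest_self : deriv (sqLogTest a) a = 2 * deriv (logTest a) a := by
  rw [deriv_sqLogTest ha a ha, logTest_self ha]
  field_simp [logWeight_ne_zero ha]

lemma zygS_sqLogTest_le {z : ℂ} (hz : z ∈ uD) : zygS 2 (sqLogTest a) z ≤ 68 := by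
  have hL := two_thirds_le_logWeight ha
  have hd := one_sub_norm_sq_mul_norm_deriv_logTest_le ha hz
  have hd0 : 0 ≤ (1 - ‖z‖ ^ 2) * ‖deriv (logTest a) z‖ :=
    mul_nonneg (one_sub_norm_sq_pos hz).le (norm_nonneg _)
  have hℓ : ‖1 + logTest a z‖ ≤ 1 + 7 * logWeight a :=
    (norm_add_le _ _).trans (by rw [norm_one]; linarith [norm_logTest_le ha hz])
  have h2 : deriv (deriv (sqLogTest a)) z
      = 2 * deriv (logTest a) z ^ 2 * (1 + logTest a z) / logWeight a := by
    unfold sqLogTest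
    rw [deriv_deriv_sq_div isOpen_uD (analyticOnNhd_logTest ha) _ hz,
      deriv_deriv_logTest ha hz]
    ring
  calc zygS 2 (sqLogTest a) z
      = 2 * ((1 - ‖z‖ ^ 2) * ‖deriv (logTest a) z‖) ^ 2 * ‖1 + logTest a z‖ / logWeight a := by
        rw [zygS, Real.rpow_two, h2, norm_div, norm_mul, norm_mul, norm_pow, Complex.norm_real,
          Real.norm_of_nonneg (logWeight_pos ha).le, Complex.norm_two]
        ring
    _ ≤ 2 * 2 ^ 2 * (1 + 7 * logWeight a) / logWeight a := by gcongr
    _ ≤ 68 := by rw [div_le_iff₀ (logWeight_pos ha)]; linarith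

lemma memZ_sqLogTest : memZ 2 (sqLogTest a) :=
  ⟨((analyticOnNhd_logTest ha).pow 2 |>.div_const).analyticOn, 68,
    fun _ hz => zygS_sqLogTest_le ha hz⟩

lemma zNorm_sqLogTest_le : zNorm 2 (sqLogTest a) ≤ 71 := by
  have hL := log_two_le_logWeight ha
  have hL0 := logWeight_pos ha
  have hlog2 := Real.log_nonneg one_le_two
  refine (zNorm_le (by norm_num) fun _ hz => zygS_sqLogTest_le ha hz).trans ?_
  rw [deriv_sqLogTest ha 0 zero_mem_uD, deriv_logTest_zero ha]
  unfold sqLogTest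
  rw [logTest_zero]
  simp only [norm_div, norm_mul, norm_pow, Complex.norm_real, Complex.norm_conj, Complex.norm_two,
    Real.norm_of_nonneg hlog2, Real.norm_of_nonneg hL0.le]
  have h₀ : Real.log 2 ^ 2 / logWeight a ≤ 1 := by
    rw [div_le_one hL0]; nlinarith [Real.log_two_lt_d9]
  have h₁ : 2 * Real.log 2 * ‖a‖ / logWeight a ≤ 2 := by
    rw [div_le_iff₀ hL0]; nlinarith [mem_uD.1 ha, norm_nonneg a]
  linarith

end SqLogTest

lemma zygS_id (a : ℝ) (z : ℂ) : zygS a (fun w => w) z = 0 := by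
  simp [zygS, deriv_id'']

lemma memZ_id : memZ 2 fun w => w :=
  ⟨analyticOn_id, 0, fun z _ => (zygS_id 2 z).le⟩

lemma zNorm_id_le : zNorm 2 (fun w => w) ≤ 1 :=
  (zNorm_le le_rfl fun z _ => (zygS_id 2 z).le).trans (by simp)

lemma div_one_sub_sq_le {X s : ℝ} (hX : 0 ≤ X) (hs0 : 0 ≤ s) (hs : s < 1) :
    X / (1 - s ^ 2) ≤ X + s / (1 - s ^ 2) * X := by
  have hpos : 0 < 1 - s ^ 2 := by nlinarith
  rw [div_le_iff₀ hpos, add_mul, div_mul_eq_mul_div, div_mul_cancel₀ _ hpos.ne']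
  nlinarith [mul_nonneg hX hs0]

section Necessity

variable {β C : ℝ} {φ g : ℂ → ℂ}

theorem exists_pointwise_bound_of_boundedOp (hφ : AnalyticOnNhd ℂ φ uD)
    (hφm : MapsTo φ uD uD) (hg : AnalyticOnNhd ℂ g uD) (hb : boundedOp 2 β (UgCphi g φ)) :
    ∃ C > 0, ∀ f, memZ 2 f → ∀ z ∈ uD, (1 - ‖z‖ ^ 2) ^ β *
      ‖deriv f (φ z) * (deriv g z * deriv φ z) + f (φ z) * deriv (deriv g) z‖ ≤ C * zNorm 2 f := by
  obtain ⟨hmap, C, hC, hest⟩ := hb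
  refine ⟨C, hC, fun f hf z hz => ?_⟩
  rw [← deriv_deriv_UgCphi hφ hφm hg hf.analyticOnNhd hz]
  exact (zygS_le_sSup (hmap f hf) hz).trans ((sSup_zygS_le_zNorm _ _).trans (hest f hf))

variable (hφm : MapsTo φ uD uD) (hC : 0 < C) (hT : ∀ f, memZ 2 f → ∀ z ∈ uD, (1 - ‖z‖ ^ 2) ^ β *
    ‖deriv f (φ z) * (deriv g z * deriv φ z) + f (φ z) * deriv (deriv g) z‖ ≤ C * zNorm 2 f)
  {z : ℂ} (hz : z ∈ uD)
include hφm hC hT hz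

/-- The test functions `logTest a` and `sqLogTest a` at `a = φ z` give the same value `logWeight a`
but derivatives `w` and `2 w`; their difference and the combination `2 logTest a - sqLogTest a`
isolate the two terms of `(U_g C_φ f)''`. -/
theorem logTest_bounds :
    (1 - ‖z‖ ^ 2) ^ β * logWeight (φ z) * ‖deriv (deriv g) z‖ ≤ 83 * C ∧
    (1 - ‖z‖ ^ 2) ^ β * (‖deriv (logTest (φ z)) (φ z)‖ * ‖deriv g z * deriv φ z‖) ≤ 77 * C := by
  have ha := hφm hz
  set P := (1 - ‖z‖ ^ 2) ^ β
  set w := deriv (logTest (φ z)) (φ z)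
  set u := deriv g z * deriv φ z
  set v := deriv (deriv g) z
  set L := logWeight (φ z)
  have hP : 0 ≤ P := Real.rpow_nonneg (one_sub_norm_sq_pos hz).le β
  have h₁ : P * ‖w * u + L * v‖ ≤ 6 * C := by
    have := hT _ (memZ_logTest ha) z hz
    rw [logTest_self ha] at this
    refine this.trans ?_
    nlinarith [zNorm_logTest_le ha]
  have h₂ : P * ‖2 * w * u + L * v‖ ≤ 71 * C := by
    have := hT _ (memZ_sqLogTest ha) z hz
    rw [sqLogTest_self ha, deriv_sqLogTest_self ha] at this
    refine this.trans ?_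
    nlinarith [zNorm_sqLogTest_le ha]
  have hv : (L : ℂ) * v = 2 * (w * u + L * v) - (2 * w * u + L * v) := by ring
  have hu : w * u = (2 * w * u + L * v) - (w * u + L * v) := by ring
  constructor
  · have := norm_sub_le (2 * (w * u + L * v)) (2 * w * u + L * v)
    rw [← hv, norm_mul, norm_mul, Complex.norm_real, Complex.norm_two,
      Real.norm_of_nonneg (logWeight_pos ha).le] at this
    calc P * L * ‖v‖ = P * (L * ‖v‖) := mul_assoc _ _ _
      _ ≤ P * (2 * ‖w * u + L * v‖ + ‖2 * w * u + L * v‖) := by gcongr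
      _ ≤ 83 * C := by linarith
  · have := norm_sub_le (2 * w * u + L * v) (w * u + L * v)
    rw [← hu, norm_mul] at this
    calc P * (‖w‖ * ‖u‖) ≤ P * (‖2 * w * u + L * v‖ + ‖w * u + L * v‖) := by gcongr
      _ ≤ 77 * C := by linarith

theorem div_one_sub_norm_sq_le :
    (1 - ‖z‖ ^ 2) ^ β * ‖deriv g z * deriv φ z‖ / (1 - ‖φ z‖ ^ 2) ≤ 203 * C := by
  have ha := hφm hz
  obtain ⟨hv, hwu⟩ := logTest_bounds hφm hC hT hz
  have hid := hT _ memZ_id z hz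
  simp only [deriv_id'', one_mul] at hid
  rw [norm_deriv_logTest_self ha] at hwu
  set P := (1 - ‖z‖ ^ 2) ^ β
  set X := P * ‖deriv g z * deriv φ z‖
  set s := ‖φ z‖
  have hP : 0 ≤ P := Real.rpow_nonneg (one_sub_norm_sq_pos hz).le β
  have hX : 0 ≤ X := by positivity
  have hs : s ≤ 1 := (mem_uD.1 ha).le
  have hv' : P * ‖deriv (deriv g) z‖ ≤ 125 * C := by
    nlinarith [two_thirds_le_logWeight ha, norm_nonneg (deriv (deriv g) z)]
  have hu : X ≤ 126 * C := by
    have h := norm_sub_le (deriv g z * deriv φ z + φ z * deriv (deriv g) z)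
      (φ z * deriv (deriv g) z)
    rw [add_sub_cancel_right, norm_mul (φ z)] at h
    have hav : P * (s * ‖deriv (deriv g) z‖) ≤ P * ‖deriv (deriv g) z‖ := by
      gcongr; exact mul_le_of_le_one_left (norm_nonneg _) hs
    calc X ≤ P * ‖deriv g z * deriv φ z + φ z * deriv (deriv g) z‖
          + P * (s * ‖deriv (deriv g) z‖) := by
          rw [← mul_add]; exact mul_le_mul_of_nonneg_left h hP
      _ ≤ 126 * C := by nlinarith [zNorm_id_le]
  -- `‖deriv (logTest a) a‖ = ‖a‖ / (1 - ‖a‖²)` degenerates near `a = 0`; the identity test covers it.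
  have hsplit := div_one_sub_sq_le hX (norm_nonneg _) (mem_uD.1 ha)
  linarith

end Necessity

theorem stmt_14_general (β : ℝ)
    (φ g : ℂ → ℂ) (hφ : AnalyticOn ℂ φ uD) (hφm : Set.MapsTo φ uD uD)
    (hg : AnalyticOn ℂ g uD) :
    boundedOp 2 β (UgCphi g φ) ↔
      ((∃ M : ℝ, ∀ z ∈ uD, (1 - ‖z‖ ^ 2) ^ β * ‖deriv g z * deriv φ z‖ / (1 - ‖φ z‖ ^ 2) ^ (1:ℝ) ≤ M) ∧ (∃ M : ℝ, ∀ z ∈ uD, (1 - ‖z‖ ^ 2) ^ β * Real.log (2 / (1 - ‖φ z‖ ^ 2)) * ‖deriv (deriv g) z‖ ≤ M)) := by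
  rw [isOpen_uD.analyticOn_iff_analyticOnNhd] at hφ hg
  simp only [Real.rpow_one]
  constructor
  · intro hb
    obtain ⟨C, hC, hT⟩ := exists_pointwise_bound_of_boundedOp hφ hφm hg hb
    exact ⟨⟨203 * C, fun z hz => div_one_sub_norm_sq_le hφm hC hT hz⟩,
      ⟨83 * C, fun z hz => (logTest_bounds hφm hC hT hz).1⟩⟩
  · rintro ⟨⟨M₁, h₁⟩, ⟨M₂, h₂⟩⟩
    exact boundedOp_UgCphi_of_bounds hφ hφm hg h₁ h₂

theorem stmt_14 (α β : ℝ) (hα : α = 2) (hβ : 0 < β)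
    (φ g : ℂ → ℂ) (hφ : AnalyticOn ℂ φ uD) (hφm : Set.MapsTo φ uD uD)
    (hg : AnalyticOn ℂ g uD) :
    boundedOp 2 β (UgCphi g φ) ↔
      ((∃ M : ℝ, ∀ z ∈ uD, (1 - ‖z‖ ^ 2) ^ β * ‖deriv g z * deriv φ z‖ / (1 - ‖φ z‖ ^ 2) ^ (1:ℝ) ≤ M) ∧ (∃ M : ℝ, ∀ z ∈ uD, (1 - ‖z‖ ^ 2) ^ β * Real.log (2 / (1 - ‖φ z‖ ^ 2)) * ‖deriv (deriv g) z‖ ≤ M)) :=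
  stmt_14_general β φ g hφ hφm hg
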